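/- The two-agent Pairing Protocol is correct: in any globally fair execution of the protocol with transition rules (c,p) → (cs,⊥) and (p,c) → (⊥,cs) and all other pairs unchanged, the number of agents in state cs is always at most the initial number of agents in state p (safety), agents in state cs never change state again (irrevocability), and eventually the number of agents in state cs equals min(|A_c|, |A_p|) (liveness). -/
import Mathlib


/-- States of the Pairing Protocol. -/
inductive PState | cs | c | p | bot
deriving DecidableEq

/-- Transition function of the Pairing Protocol: (c,p) ↦ (cs,⊥), (p,c) ↦ (⊥,cs),
identity otherwise. -/
def pairingDelta : PState → PState → PState × PState
  | PState.c, PState.p => (PState.cs, PState.bot)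
  | PState.p, PState.c => (PState.bot, PState.cs)
  | x, y => (x, y)

/-- One interaction step: a starter `s` and a reactor `r` are chosen and their states
updated according to `pairingDelta`. -/
def PairingStep {n : ℕ} (cfg cfg' : Fin n → PState) : Prop :=
  ∃ s r : Fin n, s ≠ r ∧
    cfg' = Function.update (Function.update cfg s (pairingDelta (cfg s) (cfg r)).1)
      r (pairingDelta (cfg s) (cfg r)).2

/-- Number of agents in a given state. -/
def pcount {n : ℕ} (cfg : Fin n → PState) (q : PState) : ℕ :=
  (Finset.univ.filter (fun a => cfg a = q)).card

instance : Fintype PState :=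
  ⟨{PState.cs, PState.c, PState.p, PState.bot}, by intro x; cases x <;> decide⟩

lemma step_irrev {n} {cfg cfg' : Fin n → PState} (h : PairingStep cfg cfg')
    (a : Fin n) (ha : cfg a = PState.cs) : cfg' a = PState.cs := by
  obtain ⟨s, r, hsr, rfl⟩ := h
  by_cases har : a = r
  · subst har
    rw [Function.update_self]
    rw [ha]; cases cfg s <;> rfl
  · rw [Function.update_of_ne har]
    by_cases has : a = s
    · subst has
      rw [Function.update_self, ha]; cases cfg r <;> rfl
    · rw [Function.update_of_ne has]; exact ha


lemma step_cases {n} {cfg cfg' : Fin n → PState} (h : PairingStep cfg cfg') :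
    cfg' = cfg ∨ ∃ s r : Fin n, s ≠ r ∧ cfg s = PState.c ∧ cfg r = PState.p ∧
      cfg' = Function.update (Function.update cfg s PState.cs) r PState.bot := by
  obtain ⟨s, r, hsr, rfl⟩ := h
  have key : (pairingDelta (cfg s) (cfg r) = (cfg s, cfg r)) ∨
      (cfg s = PState.c ∧ cfg r = PState.p ∧
        pairingDelta (cfg s) (cfg r) = (PState.cs, PState.bot)) ∨
      (cfg s = PState.p ∧ cfg r = PState.c ∧
        pairingDelta (cfg s) (cfg r) = (PState.bot, PState.cs)) := by
    rcases hs : cfg s <;> rcases hr : cfg r <;> decide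
  rcases key with hd | ⟨hs, hr, hd⟩ | ⟨hs, hr, hd⟩
  · left; rw [hd, Function.update_eq_self, Function.update_eq_self]
  · right; exact ⟨s, r, hsr, hs, hr, by rw [hd]⟩
  · right; refine ⟨r, s, hsr.symm, hr, hs, ?_⟩; rw [hd]
    exact Function.update_comm hsr _ _ _

lemma counts {n} {cfg : Fin n → PState} {s r : Fin n} (hsr : s ≠ r)
    (hs : cfg s = PState.c) (hr : cfg r = PState.p) :
    pcount (Function.update (Function.update cfg s PState.cs) r PState.bot) PState.cs
      = pcount cfg PState.cs + 1 ∧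
    pcount cfg PState.c
      = pcount (Function.update (Function.update cfg s PState.cs) r PState.bot) PState.c + 1 ∧
    pcount cfg PState.p
      = pcount (Function.update (Function.update cfg s PState.cs) r PState.bot) PState.p + 1 := by
  set cfg' := Function.update (Function.update cfg s PState.cs) r PState.bot with hcfg'
  have hval : ∀ a, cfg' a = if a = r then PState.bot else if a = s then PState.cs else cfg a := by
    intro a
    simp [hcfg', Function.update_apply]
  refine ⟨?_, ?_, ?_⟩
  · have hset : Finset.univ.filter (fun a => cfg' a = PState.cs)
        = insert s (Finset.univ.filter (fun a => cfg a = PState.cs)) := by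
      ext a
      by_cases har : a = r
      · subst har; simp [hval, hr, Ne.symm hsr]
      · by_cases has : a = s
        · subst has; simp [hval, har]
        · simp [hval, har, has]
    rw [pcount, pcount, hset, Finset.card_insert_of_notMem (by simp [hs])]
  · have hset : Finset.univ.filter (fun a => cfg a = PState.c)
        = insert s (Finset.univ.filter (fun a => cfg' a = PState.c)) := by
      ext a
      by_cases har : a = r
      · subst har; simp [hval, hr, Ne.symm hsr]
      · by_cases has : a = s
        · subst has; simp [hval, har, hs]
        · simp [hval, har, has]
    rw [pcount, pcount, hset, Finset.card_insert_of_notMem (by simp [hval, Ne.symm hsr, hsr])]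
  · have hset : Finset.univ.filter (fun a => cfg a = PState.p)
        = insert r (Finset.univ.filter (fun a => cfg' a = PState.p)) := by
      ext a
      by_cases har : a = r
      · subst har; simp [hval, hr]
      · by_cases has : a = s
        · subst has; simp [hval, har, hs]
        · simp [hval, har, has]
    rw [pcount, pcount, hset, Finset.card_insert_of_notMem (by simp [hval])]

/-- Correctness of the Pairing Protocol: in any globally fair execution starting from
a configuration of consumers (`c`) and producers (`p`): safety (#cs ≤ |A_p| always),
irrevocability (cs is a sink), and liveness (eventually #cs = min(|A_c|,|A_p|) stably). -/
theorem stmt6 (n : ℕ) (e : ℕ → Fin n → PState)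
    (hinit : ∀ a, e 0 a = PState.c ∨ e 0 a = PState.p)
    (hexec : ∀ t, PairingStep (e t) (e (t + 1)))
    (hfair : ∀ cfg cfg', PairingStep cfg cfg' →
      (∀ N, ∃ t, N ≤ t ∧ e t = cfg) → (∀ N, ∃ t, N ≤ t ∧ e t = cfg')) :
    (∀ t, pcount (e t) PState.cs ≤ pcount (e 0) PState.p) ∧
    (∀ t a, e t a = PState.cs → e (t + 1) a = PState.cs) ∧
    (∃ T, ∀ t, T ≤ t →
      pcount (e t) PState.cs = min (pcount (e 0) PState.c) (pcount (e 0) PState.p)) := by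
  have hcs0 : pcount (e 0) PState.cs = 0 := by
    rw [pcount, Finset.card_eq_zero, Finset.filter_eq_empty_iff]
    intro a _
    rcases hinit a with h | h <;> simp [h]
  have inv : ∀ t,
      pcount (e t) PState.cs + pcount (e t) PState.c = pcount (e 0) PState.c ∧
      pcount (e t) PState.cs + pcount (e t) PState.p = pcount (e 0) PState.p := by
    intro t
    induction t with
    | zero => simp [hcs0]
    | succ t ih =>
      rcases step_cases (hexec t) with heq | ⟨s, r, hsr, hs, hr, heq⟩
      · rw [heq]; exact ih
      · obtain ⟨h1, h2, h3⟩ := counts hsr hs hr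
        rw [heq]
        omega
  have mono : Monotone (fun t => pcount (e t) PState.cs) := by
    apply monotone_nat_of_le_succ
    intro t
    rcases step_cases (hexec t) with heq | ⟨s, r, hsr, hs, hr, heq⟩
    · rw [heq]
    · have h1 := (counts hsr hs hr).1
      simp only [heq, h1]
      omega
  have safety : ∀ t, pcount (e t) PState.cs ≤ pcount (e 0) PState.p := by
    intro t; have := (inv t).2; omega
  have fbound : ∀ t, pcount (e t) PState.cs
      ≤ min (pcount (e 0) PState.c) (pcount (e 0) PState.p) := by
    intro t; have h1 := (inv t).1; have h2 := (inv t).2; omega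
  refine ⟨safety, fun t a ha => step_irrev (hexec t) a ha, ?_⟩
  -- liveness
  set f : ℕ → ℕ := fun t => pcount (e t) PState.cs with hf
  have hne : (Set.range f).Nonempty := ⟨f 0, 0, rfl⟩
  have hbdd : BddAbove (Set.range f) := by
    refine ⟨min (pcount (e 0) PState.c) (pcount (e 0) PState.p), ?_⟩
    rintro x ⟨t, rfl⟩
    exact fbound t
  obtain ⟨T, hT⟩ := Nat.sSup_mem hne hbdd
  set K := sSup (Set.range f) with hK
  have hle : ∀ t, f t ≤ K := fun t => le_csSup hbdd ⟨t, rfl⟩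
  have hconst : ∀ t, T ≤ t → f t = K := fun t ht =>
    le_antisymm (hle t) (hT ▸ mono ht)
  refine ⟨T, fun t ht => ?_⟩
  have hKle : K ≤ min (pcount (e 0) PState.c) (pcount (e 0) PState.p) := hT ▸ fbound T
  rcases eq_or_lt_of_le hKle with hKeq | hKlt
  · have h := hconst t ht
    simp only [hf] at h
    rw [h, hKeq]
  · -- derive contradiction
    exfalso
    obtain ⟨cfg, hcfg⟩ := Finite.exists_infinite_fiber e
    have hinf : (e ⁻¹' {cfg}).Infinite := Set.infinite_coe_iff.mp hcfg
    have hocc : ∀ N, ∃ t, N ≤ t ∧ e t = cfg := by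
      intro N
      obtain ⟨m, hm, hNm⟩ := hinf.exists_gt N
      exact ⟨m, hNm.le, hm⟩
    obtain ⟨t0, hTt0, ht0⟩ := hocc T
    have hcfg_cs : pcount cfg PState.cs = K := by
      have h := hconst t0 hTt0
      simp only [hf] at h
      rwa [ht0] at h
    have hinv0 := inv t0
    rw [ht0] at hinv0
    have hcfg_c : 0 < pcount cfg PState.c := by
      have := hinv0.1; omega
    have hcfg_p : 0 < pcount cfg PState.p := by
      have := hinv0.2; omega
    obtain ⟨s, hsmem⟩ := Finset.card_pos.mp hcfg_c
    obtain ⟨r, hrmem⟩ := Finset.card_pos.mp hcfg_p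
    have hsc : cfg s = PState.c := (Finset.mem_filter.mp hsmem).2
    have hrp : cfg r = PState.p := (Finset.mem_filter.mp hrmem).2
    have hsr : s ≠ r := by
      intro h; rw [h, hrp] at hsc; exact PState.noConfusion hsc
    have hd : pairingDelta (cfg s) (cfg r) = (PState.cs, PState.bot) := by
      rw [hsc, hrp]; rfl
    have hstep : PairingStep cfg
        (Function.update (Function.update cfg s PState.cs) r PState.bot) :=
      ⟨s, r, hsr, by rw [hd]⟩
    obtain ⟨t1, hTt1, ht1⟩ := hfair _ _ hstep hocc T
    have h1 := (counts hsr hsc hrp).1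
    have hft1 : f t1 = K := hconst t1 hTt1
    rw [hf] at hft1
    simp only [ht1, h1, hcfg_cs] at hft1
    omega
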